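/- arXiv:2601.07039 — 2 statements merged into one kernel-verified Lean document; each statement's English description precedes it below -/
import Mathlib

section
/- Under the standing assumptions, for all real x, y, z one has the pointwise drift bound AV(x,y,z) = σ² + (2(kα + c0·d0/2 − c1)·x + c0·y)·y + (2y + c0·x)·β(x,y,z) ≤ −c0·y² − c0(kα − d1)·x² − 2k(1−α)·y·z − c0·k(1−α)·x·z + σ² + 2c2 + c0·d2. -/
theorem stmt_4_general (σ k α c0 c1 c2 d0 d1 d2 : ℝ) (f : ℝ → ℝ → ℝ)
    (hc0 : 0 < c0)
    (hf1 : ∀ x y : ℝ, y * f x y ≤ -c0 * y ^ 2 + c1 * x * y + c2)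
    (hf2 : ∀ x y : ℝ, x * f x y ≤ -d0 * x * y + d1 * x ^ 2 + d2) :
    ∀ x y z : ℝ,
      σ ^ 2 + (2 * (k * α + c0 * d0 / 2 - c1) * x + c0 * y) * y
          + (2 * y + c0 * x) * (f x y - k * (1 - α) * z - k * α * x)
        ≤ -c0 * y ^ 2 - c0 * (k * α - d1) * x ^ 2
          - 2 * k * (1 - α) * y * z - c0 * k * (1 - α) * x * z
          + σ ^ 2 + 2 * c2 + c0 * d2 := by
  intro x y z
  linear_combination 2 * hf1 x y + c0 * hf2 x y

/-- Pointwise drift bound: with `β(x,y,z) = 𝔣(x,y) − k(1−α)z − kαx` and the Lyapunov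
function `V(x,y) = (kα + c₀d₀/2 − c₁)x² + y² + c₀xy`, the generator applied to `V`,
`AV(x,y,z) = σ² + (2(kα + c₀d₀/2 − c₁)x + c₀y)y + (2y + c₀x)β(x,y,z)`, satisfies
`AV ≤ −c₀y² − c₀(kα − d₁)x² − 2k(1−α)yz − c₀k(1−α)xz + σ² + 2c₂ + c₀d₂`. -/
theorem stmt_4 (σ k α b c0 c1 c2 d0 d1 d2 : ℝ) (f : ℝ → ℝ → ℝ)
    (hσ : 0 < σ) (hk : 0 < k) (hα0 : 0 ≤ α) (hα1 : α ≤ 1) (hb : 0 < b)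
    (hc0 : 0 < c0) (hc1 : c1 ≤ k * α) (hc2 : 0 ≤ c2)
    (hd0 : c0 ≤ d0) (hd1 : d1 < k * α) (hd2 : 0 ≤ d2)
    (hf1 : ∀ x y : ℝ, y * f x y ≤ -c0 * y ^ 2 + c1 * x * y + c2)
    (hf2 : ∀ x y : ℝ, x * f x y ≤ -d0 * x * y + d1 * x ^ 2 + d2) :
    ∀ x y z : ℝ,
      σ ^ 2 + (2 * (k * α + c0 * d0 / 2 - c1) * x + c0 * y) * y
          + (2 * y + c0 * x) * (f x y - k * (1 - α) * z - k * α * x)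
        ≤ -c0 * y ^ 2 - c0 * (k * α - d1) * x ^ 2
          - 2 * k * (1 - α) * y * z - c0 * k * (1 - α) * x * z
          + σ ^ 2 + 2 * c2 + c0 * d2 :=
  stmt_4_general σ k α c0 c1 c2 d0 d1 d2 f hc0 hf1 hf2
end

section
/- Under the standing assumptions, the Lyapunov drift condition holds: for all real x, y and all z with |z| ≤ b, AV(x,y,z) = σ² + (2(kα + c0·d0/2 − c1)·x + c0·y)·y + (2y + c0·x)·β(x,y,z) ≤ −C1·V(x,y) + C, where C1 = min(c0/3, c0(kα − d1)/(2kα + c0·d0 + c0² − 2c1)) and C = σ² + 2c2 + c0·d2 + (k·b·(1−α))²·(2/c0 + c0/(2(kα − d1))). -/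
/-!
Expanding `AV` and inserting the two one-sided bounds on `𝔣` (weighted by `2` and `c₀`) cancels
all cross terms `xy` and leaves `σ² + 2c₂ + c₀d₂ − c₀y² − c₀(kα − d₁)x²` plus the perturbation
`−(2y + c₀x)w`, where `w = k(1−α)z` is bounded by `kb(1−α)`. Weighted Young inequalities absorb
half of each quadratic damping term into the perturbation, and the remaining half dominates
`C₁·V`, since `V ≤ (kα + c₀d₀/2 − c₁ + c₀²/2)x² + (3/2)y²`.
-/

/-- The Lyapunov function `V(x,y) = (kα + c₀d₀/2 − c₁)x² + y² + c₀xy`. -/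
noncomputable def V (k α c0 c1 d0 x y : ℝ) : ℝ :=
  (k * α + c0 * d0 / 2 - c1) * x ^ 2 + y ^ 2 + c0 * x * y

theorem mul_le_half_mul_sq_add_sq_div {ε : ℝ} (hε : 0 < ε) (a b : ℝ) :
    a * b ≤ ε / 2 * a ^ 2 + b ^ 2 / (2 * ε) := by
  have key : ε / 2 * a ^ 2 + b ^ 2 / (2 * ε) - a * b = (ε * a - b) ^ 2 / (2 * ε) := by
    field_simp
    ring
  have : 0 ≤ (ε * a - b) ^ 2 / (2 * ε) := by positivity
  linarith

theorem neg_mul_le_of_sq_le_sq {c e w W : ℝ} (hc : 0 < c) (he : 0 < e) (hw : w ^ 2 ≤ W ^ 2)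
    (x y : ℝ) :
    -((2 * y + c * x) * w)
      ≤ c / 2 * y ^ 2 + c * e / 2 * x ^ 2 + W ^ 2 * (2 / c + c / (2 * e)) := by
  have hy := mul_le_half_mul_sq_add_sq_div hc y (-2 * w)
  have hx := mul_le_half_mul_sq_add_sq_div (mul_pos hc he) x (-c * w)
  have hW : w ^ 2 * (2 / c + c / (2 * e)) ≤ W ^ 2 * (2 / c + c / (2 * e)) :=
    mul_le_mul_of_nonneg_right hw (by positivity)
  have hsplit : (-2 * w) ^ 2 / (2 * c) + (-c * w) ^ 2 / (2 * (c * e))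
      = w ^ 2 * (2 / c + c / (2 * e)) := by
    field_simp
  linarith

theorem drift_le_of_dissipative {σ a c0 c1 c2 d0 d1 d2 x y w F : ℝ} (hc0 : 0 ≤ c0)
    (hF1 : y * F ≤ -c0 * y ^ 2 + c1 * x * y + c2)
    (hF2 : x * F ≤ -d0 * x * y + d1 * x ^ 2 + d2) :
    σ ^ 2 + (2 * (a + c0 * d0 / 2 - c1) * x + c0 * y) * y + (2 * y + c0 * x) * (F - w - a * x)
      ≤ σ ^ 2 + 2 * c2 + c0 * d2 - c0 * y ^ 2 - c0 * (a - d1) * x ^ 2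
        - (2 * y + c0 * x) * w := by
  nlinarith [mul_le_mul_of_nonneg_left hF2 hc0]

theorem V_le (k α c0 c1 d0 x y : ℝ) :
    V k α c0 c1 d0 x y ≤ (2 * k * α + c0 * d0 + c0 ^ 2 - 2 * c1) / 2 * x ^ 2 + 3 / 2 * y ^ 2 := by
  unfold V
  nlinarith [sq_nonneg (c0 * x - y)]

theorem mul_V_le {k α c0 c1 d0 e m : ℝ} (hm : 0 ≤ m) (hm3 : m ≤ c0 / 3)
    (hmD : m * (2 * k * α + c0 * d0 + c0 ^ 2 - 2 * c1) ≤ c0 * e) (x y : ℝ) :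
    m * V k α c0 c1 d0 x y ≤ c0 / 2 * y ^ 2 + c0 * e / 2 * x ^ 2 := by
  calc m * V k α c0 c1 d0 x y
      ≤ m * ((2 * k * α + c0 * d0 + c0 ^ 2 - 2 * c1) / 2 * x ^ 2 + 3 / 2 * y ^ 2) :=
        mul_le_mul_of_nonneg_left (V_le k α c0 c1 d0 x y) hm
    _ ≤ c0 / 2 * y ^ 2 + c0 * e / 2 * x ^ 2 := by
        nlinarith [mul_le_mul_of_nonneg_right hmD (sq_nonneg x),
          mul_le_mul_of_nonneg_right hm3 (sq_nonneg y)]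

theorem stmt_5_general (σ k α b c0 c1 c2 d0 d1 d2 : ℝ) (f : ℝ → ℝ → ℝ)
    (hc0 : 0 < c0) (hc1 : c1 ≤ k * α)
    (hd0 : c0 ≤ d0) (hd1 : d1 < k * α)
    (hf1 : ∀ x y : ℝ, y * f x y ≤ -c0 * y ^ 2 + c1 * x * y + c2)
    (hf2 : ∀ x y : ℝ, x * f x y ≤ -d0 * x * y + d1 * x ^ 2 + d2) :
    ∀ x y z : ℝ, |z| ≤ b →
      σ ^ 2 + (2 * (k * α + c0 * d0 / 2 - c1) * x + c0 * y) * y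
          + (2 * y + c0 * x) * (f x y - k * (1 - α) * z - k * α * x)
        ≤ -(min (c0 / 3) (c0 * (k * α - d1) / (2 * k * α + c0 * d0 + c0 ^ 2 - 2 * c1)))
              * V k α c0 c1 d0 x y
          + (σ ^ 2 + 2 * c2 + c0 * d2
              + (k * b * (1 - α)) ^ 2 * (2 / c0 + c0 / (2 * (k * α - d1)))) := by
  intro x y z hz
  have he : 0 < k * α - d1 := sub_pos.2 hd1
  have hD : 0 < 2 * k * α + c0 * d0 + c0 ^ 2 - 2 * c1 := by
    nlinarith [mul_le_mul_of_nonneg_left hd0 hc0.le]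
  have hC1 : 0 ≤ min (c0 / 3) (c0 * (k * α - d1) / (2 * k * α + c0 * d0 + c0 ^ 2 - 2 * c1)) :=
    le_min (by positivity) (by positivity)
  have hC1V := mul_V_le (k := k) (α := α) (c1 := c1) (d0 := d0) hC1 (min_le_left _ _)
    ((le_div_iff₀ hD).1 (min_le_right _ _)) x y
  have hw : (k * (1 - α) * z) ^ 2 ≤ (k * b * (1 - α)) ^ 2 := by
    rw [sq_le_sq, mul_right_comm k b, abs_mul, abs_mul _ b]
    exact mul_le_mul_of_nonneg_left (hz.trans (le_abs_self b)) (abs_nonneg _)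
  have hdrift := drift_le_of_dissipative (σ := σ) (a := k * α) (w := k * (1 - α) * z) hc0.le
    (hf1 x y) (hf2 x y)
  have hpert := neg_mul_le_of_sq_le_sq hc0 he hw x y
  linarith

/-- Lyapunov drift condition: for `|z| ≤ b`,
`AV(x,y,z) = σ² + (2(kα + c₀d₀/2 − c₁)x + c₀y)y + (2y + c₀x)β(x,y,z) ≤ −C₁·V(x,y) + C`,
where `β(x,y,z) = 𝔣(x,y) − k(1−α)z − kαx`,
`C₁ = min(c₀/3, c₀(kα − d₁)/(2kα + c₀d₀ + c₀² − 2c₁))` and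
`C = σ² + 2c₂ + c₀d₂ + (kb(1−α))²(2/c₀ + c₀/(2(kα − d₁)))`. -/
theorem stmt_5 (σ k α b c0 c1 c2 d0 d1 d2 : ℝ) (f : ℝ → ℝ → ℝ)
    (hσ : 0 < σ) (hk : 0 < k) (hα0 : 0 ≤ α) (hα1 : α ≤ 1) (hb : 0 < b)
    (hc0 : 0 < c0) (hc1 : c1 ≤ k * α) (hc2 : 0 ≤ c2)
    (hd0 : c0 ≤ d0) (hd1 : d1 < k * α) (hd2 : 0 ≤ d2)
    (hf1 : ∀ x y : ℝ, y * f x y ≤ -c0 * y ^ 2 + c1 * x * y + c2)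
    (hf2 : ∀ x y : ℝ, x * f x y ≤ -d0 * x * y + d1 * x ^ 2 + d2) :
    ∀ x y z : ℝ, |z| ≤ b →
      σ ^ 2 + (2 * (k * α + c0 * d0 / 2 - c1) * x + c0 * y) * y
          + (2 * y + c0 * x) * (f x y - k * (1 - α) * z - k * α * x)
        ≤ -(min (c0 / 3) (c0 * (k * α - d1) / (2 * k * α + c0 * d0 + c0 ^ 2 - 2 * c1)))
              * V k α c0 c1 d0 x y
          + (σ ^ 2 + 2 * c2 + c0 * d2
              + (k * b * (1 - α)) ^ 2 * (2 / c0 + c0 / (2 * (k * α - d1)))) :=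
  stmt_5_general σ k α b c0 c1 c2 d0 d1 d2 f hc0 hc1 hd0 hd1 hf1 hf2
end
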